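/- Let G be a d-regular graph with chromatic index d+1 and resistance 1. If G admits a proper (d+1)-edge-coloring c with c⁻¹(d+1) = {e} for a single edge e not contained in any 3-cycle of G, then the proper additive chromatic index of G is at most 2d. -/
import Mathlib


open scoped Classical
open Finset

namespace AddEdge

variable {V : Type*} [Fintype V] [DecidableEq V]

/-- `N'(e)`-sum: the sum of the colors of the edges of `G` sharing an endpoint
with `e`, excluding `e` itself. -/
noncomputable def nbrSum (G : SimpleGraph V) (c : Sym2 V → ℕ) (e : Sym2 V) : ℕ :=
  ∑ f ∈ univ.filter (fun f => f ∈ G.edgeSet ∧ f ≠ e ∧ ∃ v, v ∈ e ∧ v ∈ f), c f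

/-- `c` is a proper edge coloring of `G`: distinct incident edges get distinct colors. -/
def IsProperEdgeColoring (G : SimpleGraph V) (c : Sym2 V → ℕ) : Prop :=
  ∀ e ∈ G.edgeSet, ∀ f ∈ G.edgeSet, e ≠ f → (∃ v, v ∈ e ∧ v ∈ f) → c e ≠ c f

/-- `c` is an additive edge coloring of `G`: distinct incident edges have distinct
sums of colors over their incident-edge neighborhoods. -/
def IsAdditiveEdgeColoring (G : SimpleGraph V) (c : Sym2 V → ℕ) : Prop :=
  ∀ e ∈ G.edgeSet, ∀ f ∈ G.edgeSet, e ≠ f → (∃ v, v ∈ e ∧ v ∈ f) →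
    nbrSum G c e ≠ nbrSum G c f

/-- The chromatic index: the least `k` such that `G` has a proper edge coloring
with colors from `{1, …, k}`. -/
noncomputable def chromIndex (G : SimpleGraph V) : ℕ :=
  sInf {k | ∃ c : Sym2 V → ℕ, (∀ e ∈ G.edgeSet, c e ∈ Finset.Icc 1 k) ∧
    IsProperEdgeColoring G c}

/-- The proper additive chromatic index `η'_p(G)`: the least `k` such that `G` has an
edge coloring with colors from `{1, …, k}` that is both proper and additive. -/
noncomputable def properAddIndex (G : SimpleGraph V) : ℕ :=
  sInf {k | ∃ c : Sym2 V → ℕ, (∀ e ∈ G.edgeSet, c e ∈ Finset.Icc 1 k) ∧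
    IsProperEdgeColoring G c ∧ IsAdditiveEdgeColoring G c}

/-- `e'` is 2-reachable from `e`: there is a path of length two in `G` from an
endpoint of `e` to an endpoint of `e'`. -/
def TwoReachable (G : SimpleGraph V) (e e' : Sym2 V) : Prop :=
  ∃ x y z : V, x ∈ e ∧ z ∈ e' ∧ G.Adj x y ∧ G.Adj y z ∧ x ≠ z

/-- `c` is a spaced `(d+1)`-edge-coloring of the `d`-regular graph `G`: a proper
edge coloring with colors `{1, …, d+1}` such that no edge colored `d+1` is
2-reachable from an edge colored `d+1`. -/
def IsSpacedColoring (G : SimpleGraph V) (d : ℕ) (c : Sym2 V → ℕ) : Prop :=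
  (∀ e ∈ G.edgeSet, c e ∈ Finset.Icc 1 (d + 1)) ∧ IsProperEdgeColoring G c ∧
    ∀ e ∈ G.edgeSet, ∀ e' ∈ G.edgeSet, c e = d + 1 → c e' = d + 1 →
      ¬ TwoReachable G e e'

/-- The resistance of a `d`-regular Vizing-class-2 graph `G`: the minimum number of
edges colored `d+1` over all proper `(d+1)`-edge-colorings of `G`. -/
noncomputable def resistance (G : SimpleGraph V) (d : ℕ) : ℕ :=
  sInf {r | ∃ c : Sym2 V → ℕ, (∀ e ∈ G.edgeSet, c e ∈ Finset.Icc 1 (d + 1)) ∧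
    IsProperEdgeColoring G c ∧
    (univ.filter (fun e => e ∈ G.edgeSet ∧ c e = d + 1)).card = r}

set_option linter.unusedSectionVars false

lemma sym2_exists_rep (e : Sym2 V) : ∃ a b, e = s(a, b) := by
  induction e using Sym2.ind with
  | _ x y => exact ⟨x, y, rfl⟩

lemma sym2_eq_of_mem {u v : V} (huv : u ≠ v) {f : Sym2 V} (hu : u ∈ f) (hv : v ∈ f) :
    f = s(u, v) := by
  induction f using Sym2.ind with
  | _ x y =>
    rw [Sym2.mem_iff] at hu hv
    rcases hu with rfl | rfl <;> rcases hv with h | h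
    · exact absurd h.symm huv
    · rw [h]
    · rw [h]; exact Sym2.eq_swap
    · exact absurd h.symm huv

noncomputable def incE (G : SimpleGraph V) (v : V) : Finset (Sym2 V) :=
  univ.filter (fun f => f ∈ G.edgeSet ∧ v ∈ f)

lemma mem_incE {G : SimpleGraph V} {v : V} {f : Sym2 V} :
    f ∈ incE G v ↔ f ∈ G.edgeSet ∧ v ∈ f := by simp [incE]

lemma incE_card (G : SimpleGraph V) (v : V) : (incE G v).card = G.degree v := by
  classical
  rw [← SimpleGraph.card_incidenceFinset_eq_degree]
  congr 1
  ext f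
  rw [mem_incE, SimpleGraph.mem_incidenceFinset]
  rfl

lemma nbrSum_add_two_mul (G : SimpleGraph V) (c' : Sym2 V → ℕ) {u v : V} (h : G.Adj u v) :
    nbrSum G c' s(u, v) + 2 * c' s(u, v)
      = (∑ f ∈ incE G u, c' f) + (∑ f ∈ incE G v, c' f) := by
  have hne : u ≠ v := h.ne
  have heS : s(u, v) ∈ G.edgeSet := G.mem_edgeSet.mpr h
  have hmem : s(u, v) ∈ incE G u ∪ incE G v := by
    rw [Finset.mem_union, mem_incE]
    exact Or.inl ⟨heS, by simp⟩
  have hfilter : (univ.filter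
      (fun f => f ∈ G.edgeSet ∧ f ≠ s(u, v) ∧ ∃ x, x ∈ s(u, v) ∧ x ∈ f))
      = (incE G u ∪ incE G v).erase s(u, v) := by
    ext f
    simp only [Finset.mem_filter, Finset.mem_erase, Finset.mem_union, mem_incE,
      Finset.mem_univ, true_and, Sym2.mem_iff]
    constructor
    · rintro ⟨hf, hne', x, (rfl | rfl), hx⟩
      · exact ⟨hne', Or.inl ⟨hf, hx⟩⟩
      · exact ⟨hne', Or.inr ⟨hf, hx⟩⟩
    · rintro ⟨hne', (⟨hf, hx⟩ | ⟨hf, hx⟩)⟩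
      · exact ⟨hf, hne', u, Or.inl rfl, hx⟩
      · exact ⟨hf, hne', v, Or.inr rfl, hx⟩
  have hinter : incE G u ∩ incE G v = {s(u, v)} := by
    ext f
    simp only [Finset.mem_inter, mem_incE, Finset.mem_singleton]
    constructor
    · rintro ⟨⟨hf, hu⟩, ⟨_, hv⟩⟩
      exact sym2_eq_of_mem hne hu hv
    · rintro rfl
      exact ⟨⟨heS, by simp⟩, ⟨heS, by simp⟩⟩
  have h1 := Finset.sum_erase_add (incE G u ∪ incE G v) c' hmem
  have h2 := Finset.sum_union_inter (s₁ := incE G u) (s₂ := incE G v) (f := c')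
  rw [hinter, Finset.sum_singleton] at h2
  simp only [nbrSum]
  rw [hfilter]
  omega

lemma gauss_icc (n : ℕ) : 2 * (∑ i ∈ Finset.Icc 1 n, i) = n * (n + 1) := by
  induction n with
  | zero => simp
  | succ m ih =>
    rw [Finset.sum_Icc_succ_top (by omega), Nat.mul_add, ih]
    ring

/-- If `G` is `d`-regular with chromatic index `d+1` and resistance 1,
and admits a proper `(d+1)`-edge-coloring whose unique edge colored `d+1` lies in
no 3-cycle of `G`, then `η'_p(G) ≤ 2d`. -/
theorem properAddIndex_le_of_resistance_one (G : SimpleGraph V) (d : ℕ)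
    (hreg : G.IsRegularOfDegree d) (hchrom : chromIndex G = d + 1)
    (hres : resistance G d = 1)
    (c : Sym2 V → ℕ) (hcol : ∀ e ∈ G.edgeSet, c e ∈ Finset.Icc 1 (d + 1))
    (hc : IsProperEdgeColoring G c) (e₀ : Sym2 V) (he₀ : e₀ ∈ G.edgeSet)
    (huniq : ∀ e ∈ G.edgeSet, (c e = d + 1 ↔ e = e₀))
    (htri : ∀ u v w : V, G.Adj u v → G.Adj v w → G.Adj w u → e₀ ≠ s(u, v)) :
    properAddIndex G ≤ 2 * d := by
  classical
  obtain ⟨a, b, hab⟩ := sym2_exists_rep e₀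
  have hAdj : G.Adj a b := by
    rw [hab, SimpleGraph.mem_edgeSet] at he₀; exact he₀
  have hdpos : 0 < d := by
    have h1 := hreg a
    have h2 : 0 < G.degree a := (G.degree_pos_iff_exists_adj a).2 ⟨b, hAdj⟩
    omega
  set c' : Sym2 V → ℕ := fun f => if f = e₀ then 1 else 2 * c f with hc'def
  have hc'val : ∀ f, f ≠ e₀ → c' f = 2 * c f := fun f hf => if_neg hf
  have hc'e₀ : c' e₀ = 1 := if_pos rfl
  have hcle : ∀ f ∈ G.edgeSet, f ≠ e₀ → 1 ≤ c f ∧ c f ≤ d := by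
    intro f hf hfe
    have h1 := Finset.mem_Icc.mp (hcol f hf)
    have h2 : c f ≠ d + 1 := fun h => hfe ((huniq f hf).1 h)
    omega
  -- properness of c'
  have hproper : IsProperEdgeColoring G c' := by
    intro e he f hf hef hshare
    by_cases h1 : e = e₀ <;> by_cases h2 : f = e₀
    · exact absurd (h1.trans h2.symm) hef
    · rw [h1, hc'e₀, hc'val f h2]
      have := (hcle f hf h2).1; omega
    · rw [h2, hc'e₀, hc'val e h1]
      have := (hcle e he h1).1; omega
    · rw [hc'val e h1, hc'val f h2]
      have := hc e he f hf hef hshare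
      omega
  -- incident edges of a vertex away from e₀ avoid e₀
  have hIncNe : ∀ v : V, v ≠ a → v ≠ b → ∀ f ∈ incE G v, f ≠ e₀ := by
    intro v hva hvb f hf hfe
    rw [mem_incE] at hf
    rw [hfe, hab, Sym2.mem_iff] at hf
    rcases hf.2 with h | h
    · exact hva h
    · exact hvb h
  -- value of the local sum away from e₀
  have hσval : ∀ v : V, v ≠ a → v ≠ b → (∑ f ∈ incE G v, c' f) = d * (d + 1) := by
    intro v hva hvb
    have hcards : (incE G v).card = d := by rw [incE_card]; exact hreg v
    have hinj : ∀ f ∈ incE G v, ∀ g ∈ incE G v, c f = c g → f = g := by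
      intro f hf g hg hfg
      by_contra hne
      have hf' := mem_incE.mp hf
      have hg' := mem_incE.mp hg
      exact hc f hf'.1 g hg'.1 hne ⟨v, hf'.2, hg'.2⟩ hfg
    have himage : (incE G v).image c = Finset.Icc 1 d := by
      apply Finset.eq_of_subset_of_card_le
      · intro x hx
        obtain ⟨f, hf, rfl⟩ := Finset.mem_image.mp hx
        have hf' := mem_incE.mp hf
        exact Finset.mem_Icc.mpr (hcle f hf'.1 (hIncNe v hva hvb f hf))
      · rw [Finset.card_image_of_injOn hinj, hcards, Nat.card_Icc]
        omega
    have hsum2 : (∑ f ∈ incE G v, c f) = ∑ x ∈ Finset.Icc 1 d, x := by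
      rw [← himage, Finset.sum_image hinj]
    have : (∑ f ∈ incE G v, c' f) = 2 * ∑ f ∈ incE G v, c f := by
      rw [Finset.mul_sum]
      exact Finset.sum_congr rfl fun f hf => hc'val f (hIncNe v hva hvb f hf)
    rw [this, hsum2, gauss_icc]
  -- local sums at the endpoints of e₀ are odd
  have hσodd : ∀ v : V, v = a ∨ v = b → Odd (∑ f ∈ incE G v, c' f) := by
    intro v hv
    have he₀mem : e₀ ∈ incE G v := by
      rw [mem_incE]
      refine ⟨he₀, ?_⟩
      rw [hab, Sym2.mem_iff]
      tauto
    have hsplit := Finset.add_sum_erase (incE G v) c' he₀mem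
    have heven : (∑ f ∈ (incE G v).erase e₀, c' f)
        = 2 * ∑ f ∈ (incE G v).erase e₀, c f := by
      rw [Finset.mul_sum]
      exact Finset.sum_congr rfl fun f hf => hc'val f (Finset.ne_of_mem_erase hf)
    refine ⟨∑ f ∈ (incE G v).erase e₀, c f, ?_⟩
    omega
  -- additivity of c'
  have hadd : IsAdditiveEdgeColoring G c' := by
    rintro e he f hf hef ⟨v, hvE, hvF⟩ hsum_eq
    obtain ⟨u, heq⟩ : ∃ u, e = s(v, u) := ⟨Sym2.Mem.other hvE, (Sym2.other_spec hvE).symm⟩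
    obtain ⟨w, hfq⟩ : ∃ w, f = s(v, w) := ⟨Sym2.Mem.other hvF, (Sym2.other_spec hvF).symm⟩
    have hAdj_vu : G.Adj v u := by rw [heq, SimpleGraph.mem_edgeSet] at he; exact he
    have hAdj_vw : G.Adj v w := by rw [hfq, SimpleGraph.mem_edgeSet] at hf; exact hf
    have huw : u ≠ w := by rintro rfl; exact hef (heq.trans hfq.symm)
    have h1 := nbrSum_add_two_mul G c' hAdj_vu
    have h2 := nbrSum_add_two_mul G c' hAdj_vw
    rw [← heq] at h1
    rw [← hfq] at h2
    have key : (∑ f' ∈ incE G u, c' f') + 2 * c' f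
        = (∑ f' ∈ incE G w, c' f') + 2 * c' e := by omega
    by_cases hu1 : u = a ∨ u = b <;> by_cases hw1 : w = a ∨ w = b
    · -- both endpoints of e₀ : triangle, contradiction
      have he₀uw : e₀ = s(u, w) := by
        rw [hab]
        rcases hu1 with h | h <;> rcases hw1 with h' | h'
        · exact absurd (h.trans h'.symm) huw
        · rw [h, h']
        · rw [h, h']; exact Sym2.eq_swap
        · exact absurd (h.trans h'.symm) huw
      have hAdj_uw : G.Adj u w := by
        have : s(u, w) ∈ G.edgeSet := he₀uw ▸ he₀
        exact G.mem_edgeSet.mp this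
      exact htri u w v hAdj_uw hAdj_vw.symm hAdj_vu he₀uw
    · -- u endpoint, w not : parity
      push_neg at hw1
      obtain ⟨k, hk⟩ := hσodd u hu1
      have hw' := hσval w hw1.1 hw1.2
      obtain ⟨m, hm⟩ := Nat.even_mul_succ_self d
      omega
    · -- w endpoint, u not : parity
      push_neg at hu1
      obtain ⟨k, hk⟩ := hσodd w hw1
      have hu' := hσval u hu1.1 hu1.2
      obtain ⟨m, hm⟩ := Nat.even_mul_succ_self d
      omega
    · -- neither : proper coloring contradiction
      push_neg at hu1; push_neg at hw1
      have hu' := hσval u hu1.1 hu1.2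
      have hw' := hσval w hw1.1 hw1.2
      have hcc : c' e = c' f := by omega
      have heE : e ≠ e₀ := by
        intro h
        have : u ∈ e := by rw [heq]; simp
        rw [h, hab, Sym2.mem_iff] at this
        rcases this with h' | h'
        · exact hu1.1 h'
        · exact hu1.2 h'
      have hfE : f ≠ e₀ := by
        intro h
        have : w ∈ f := by rw [hfq]; simp
        rw [h, hab, Sym2.mem_iff] at this
        rcases this with h' | h'
        · exact hw1.1 h'
        · exact hw1.2 h'
      rw [hc'val e heE, hc'val f hfE] at hcc
      exact hc e he f hf hef ⟨v, hvE, hvF⟩ (by omega)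
  -- conclude
  have hbound : ∀ e ∈ G.edgeSet, c' e ∈ Finset.Icc 1 (2 * d) := by
    intro f hf
    rw [Finset.mem_Icc]
    by_cases h : f = e₀
    · rw [h, hc'e₀]; omega
    · rw [hc'val f h]
      have := hcle f hf h
      omega
  exact Nat.sInf_le ⟨c', hbound, hproper, hadd⟩


end AddEdge
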